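/- arXiv:1510.07428 — 5 statements merged into one kernel-verified Lean document; each statement's English description precedes it below -/
import Mathlib

section
/- For every K>0 and every ε>0 there exists s₀ ∈ ℕ such that for all integers s ≥ s₀ there is a set H ⊆ {1,…,s}² with |H| ≥ s² − K·s such that every connected component of the subgraph of the king's move grid K_s induced by H has at most (a(K)+ε)·s² vertices, where a(K) = 1/(⌊K⌋+1) if K > 1 and a(K) = 1 − (K/2)² if K ≤ 1. In particular, 0 < a(K) < 1 for all K > 0 and a(K) → 0 as K → ∞. -/
open Filter Topology

noncomputable section

/-- The king's move grid on `ℤ²`: two distinct lattice points are adjacent iff their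
Euclidean distance is at most `√2`. -/
def kingGraph : SimpleGraph (ℤ × ℤ) where
  Adj p q := p ≠ q ∧
    Real.sqrt (((p.1 - q.1 : ℤ) : ℝ)^2 + ((p.2 - q.2 : ℤ) : ℝ)^2) ≤ Real.sqrt 2
  symm := by
    constructor
    intro p q h
    refine ⟨h.1.symm, ?_⟩
    have : (((q.1 - p.1 : ℤ) : ℝ)^2 + ((q.2 - p.2 : ℤ) : ℝ)^2)
        = (((p.1 - q.1 : ℤ) : ℝ)^2 + ((p.2 - q.2 : ℤ) : ℝ)^2) := by push_cast; ring
    rw [this]; exact h.2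
  loopless := by constructor; intro p h; exact h.1 rfl

/-- The vertex set `{1,…,s}²` of the `s × s` grid, as a subset of `ℤ²`. -/
def gridBox (s : ℕ) : Set (ℤ × ℤ) := Set.Icc (1 : ℤ) s ×ˢ Set.Icc (1 : ℤ) s

/-- The function `a(K)` from the barrier lemma: `a(K) = 1/(⌊K⌋+1)` if `K > 1`, and
`a(K) = 1 − (K/2)²` if `K ≤ 1`. -/
def aFun (K : ℝ) : ℝ := if 1 < K then 1 / ((⌊K⌋ : ℝ) + 1) else 1 - (K / 2)^2

/-!
A king's move changes each coordinate, hence also `max x y`, by at most one, so a king path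
cannot jump over a level set of such a function: deleting a level set splits the grid into the
parts on either side. For `K > 1`, with `m = ⌊K⌋`, delete the (at most `m`) rows whose height
is a multiple of `⌊s / (m + 1)⌋ + 1`; every component then lies in a horizontal strip of
`⌊s / (m + 1)⌋` rows, i.e. has at most `s² / (m + 1)` points. For `K ≤ 1`, delete the
L-shaped path `max x y = t` with `t = ⌊K s / 2⌋` (at most `K s` points); a component lies
either in the corner square `[1, t)²`, of size at most `(K s / 2)²`, or in the complement of
`[1, t]²`, of size `s² - t² ≤ (1 - (K / 2)²) s² + K s`.
-/

open Finset

namespace SimpleGraph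

variable {V : Type*} {G : SimpleGraph V}

theorem Reachable.apply_eq_of_adj {β : Type*} (f : V → β) (hf : ∀ a b, G.Adj a b → f a = f b)
    {u v : V} (h : G.Reachable u v) : f u = f v := by
  obtain ⟨p⟩ := h
  induction p with
  | nil => rfl
  | cons hadj _ ih => exact (hf _ _ hadj).trans ih

theorem natCard_reachable_induce_le {β : Type*} {H : Set V} (f : V → β)
    (hf : ∀ a ∈ H, ∀ b ∈ H, G.Adj a b → f a = f b) (v : H) (T : Finset V)
    (hT : ∀ w ∈ H, f w = f v → w ∈ T) :
    Nat.card {w : H // (G.induce H).Reachable v w} ≤ #T := by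
  have hmem (w : {w : H // (G.induce H).Reachable v w}) : (w.1 : V) ∈ T :=
    hT _ w.1.2 <| (w.2.apply_eq_of_adj (fun a : H => f a) fun a b hab => hf a a.2 b b.2 hab).symm
  calc Nat.card {w : H // (G.induce H).Reachable v w}
      ≤ Nat.card T := Nat.card_le_card_of_injective (fun w => ⟨w.1, hmem w⟩)
        fun a b hab => Subtype.ext <| Subtype.ext <| by simpa using hab
    _ = #T := Nat.card_eq_finsetCard T

end SimpleGraph

theorem Int.ediv_eq_ediv_of_abs_sub_le_one {d y z : ℤ} (hd : 0 < d) (hy : ¬d ∣ y)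
    (hz : ¬d ∣ z) (h : |y - z| ≤ 1) : y / d = z / d := by
  wlog hyz : y / d ≤ z / d generalizing y z
  · exact (this hz hy (abs_sub_comm y z ▸ h) (le_of_not_ge hyz)).symm
  by_contra hne
  have hstep : d * (y / d) + d ≤ d * (z / d) := by
    have := mul_le_mul_of_nonneg_left (Int.add_one_le_of_lt (lt_of_le_of_ne hyz hne)) hd.le
    linarith
  have hy_lt : y % d < d := Int.emod_lt_of_pos y hd
  have hz_pos : 0 < z % d :=
    lt_of_le_of_ne (Int.emod_nonneg z hd.ne') (Ne.symm (mt Int.dvd_of_emod_eq_zero hz))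
  linarith [Int.emod_add_mul_ediv y d, Int.emod_add_mul_ediv z d, (abs_le.mp h).1]

theorem kingGraph_adj_abs_sub_le {p q : ℤ × ℤ} (h : kingGraph.Adj p q) :
    |p.1 - q.1| ≤ 1 ∧ |p.2 - q.2| ≤ 1 := by
  have hsq : (p.1 - q.1) ^ 2 + (p.2 - q.2) ^ 2 ≤ 2 := by
    exact_mod_cast (Real.sqrt_le_sqrt_iff (by norm_num)).mp h.2
  constructor <;> by_contra! hlt <;>
    nlinarith [sq_abs (p.1 - q.1), sq_abs (p.2 - q.2), sq_nonneg (p.1 - q.1), sq_nonneg (p.2 - q.2)]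

theorem Int.card_Icc_one_natCast (n : ℕ) : #(Icc (1 : ℤ) n) = n := by
  simp

def gridBoxFinset (s : ℕ) : Finset (ℤ × ℤ) := Icc 1 (s : ℤ) ×ˢ Icc 1 (s : ℤ)

theorem coe_gridBoxFinset (s : ℕ) : (gridBoxFinset s : Set (ℤ × ℤ)) = gridBox s := by
  simp [gridBoxFinset, gridBox]

theorem card_gridBoxFinset (s : ℕ) : #(gridBoxFinset s) = s * s := by
  simp [gridBoxFinset]

theorem coe_subset_gridBox {s : ℕ} {H : Finset (ℤ × ℤ)} (h : H ⊆ gridBoxFinset s) :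
    (H : Set (ℤ × ℤ)) ⊆ gridBox s :=
  coe_gridBoxFinset s ▸ coe_subset.mpr h

def gridCutRows (s d : ℕ) : Finset (ℤ × ℤ) := {p ∈ gridBoxFinset s | ¬(d : ℤ) ∣ p.2}

theorem card_multiples_Icc_le {s m d : ℕ} (hsd : s < (m + 1) * d) :
    #{y ∈ Icc (1 : ℤ) s | (d : ℤ) ∣ y} ≤ m := by
  have hsub : {y ∈ Icc (1 : ℤ) s | (d : ℤ) ∣ y} ⊆ (Icc (1 : ℤ) m).image (· * (d : ℤ)) := by
    intro y hy
    obtain ⟨⟨hy1, hys⟩, k, rfl⟩ := by simpa using hy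
    have hsd' : (s : ℤ) < (m + 1) * d := by exact_mod_cast hsd
    refine mem_image.mpr ⟨k, mem_Icc.mpr ⟨?_, ?_⟩, mul_comm _ _⟩ <;> nlinarith
  calc _ ≤ #((Icc (1 : ℤ) m).image (· * (d : ℤ))) := card_le_card hsub
    _ ≤ #(Icc (1 : ℤ) m) := card_image_le
    _ = m := Int.card_Icc_one_natCast m

theorem card_gridCutRows_add {s m d : ℕ} (hsd : s < (m + 1) * d) :
    s * s ≤ #(gridCutRows s d) + m * s := by
  have hsplit := card_filter_add_card_filter_not (s := gridBoxFinset s) (fun p => (d : ℤ) ∣ p.2)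
  have hrows : #{p ∈ gridBoxFinset s | (d : ℤ) ∣ p.2} ≤ m * s := by
    rw [gridBoxFinset, filter_product_right, card_product, Int.card_Icc_one_natCast, mul_comm]
    exact Nat.mul_le_mul_right s (card_multiples_Icc_le hsd)
  rw [card_gridBoxFinset] at hsplit
  rw [gridCutRows]
  omega

theorem natCard_reachable_gridCutRows_le {s d : ℕ} (hd : 0 < d)
    (v : (gridCutRows s d : Set (ℤ × ℤ))) :
    Nat.card {w : (gridCutRows s d : Set (ℤ × ℤ)) //
      (kingGraph.induce (gridCutRows s d : Set (ℤ × ℤ))).Reachable v w} ≤ s * (d - 1) := by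
  have hdZ : (0 : ℤ) < d := by exact_mod_cast hd
  set q := (v : ℤ × ℤ).2 / d
  have hmem (p : ℤ × ℤ) : p ∈ gridCutRows s d ↔ p ∈ gridBoxFinset s ∧ ¬(d : ℤ) ∣ p.2 := mem_filter
  calc _ ≤ #(Icc (1 : ℤ) s ×ˢ Ioo (d * q) (d * q + d)) := by
        refine SimpleGraph.natCard_reachable_induce_le (fun p : ℤ × ℤ => p.2 / d) ?_ v _ ?_
        · intro a ha b hb hab
          exact Int.ediv_eq_ediv_of_abs_sub_le_one hdZ ((hmem a).mp ha).2 ((hmem b).mp hb).2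
            (kingGraph_adj_abs_sub_le hab).2
        · intro w hw hwq
          obtain ⟨hbox, hndvd⟩ := (hmem w).mp hw
          have hpos : 0 < w.2 % d :=
            lt_of_le_of_ne (Int.emod_nonneg _ hdZ.ne') (Ne.symm (mt Int.dvd_of_emod_eq_zero hndvd))
          have hlt : w.2 % d < d := Int.emod_lt_of_pos _ hdZ
          have hw2 := Int.emod_add_mul_ediv w.2 d
          rw [hwq] at hw2
          simp only [gridBoxFinset, mem_product] at hbox
          exact mem_product.mpr ⟨hbox.1, mem_Ioo.mpr ⟨by linarith, by linarith⟩⟩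
    _ = s * (d - 1) := by
        rw [card_product, Int.card_Icc_one_natCast, Int.card_Ioo]
        congr 1
        omega

def gridCutCorner (s t : ℕ) : Finset (ℤ × ℤ) := {p ∈ gridBoxFinset s | max p.1 p.2 ≠ (t : ℤ)}

theorem card_gridCutCorner_add (s t : ℕ) : s * s ≤ #(gridCutCorner s t) + 2 * t := by
  have hsplit := card_filter_add_card_filter_not (s := gridBoxFinset s)
    (fun p : ℤ × ℤ => max p.1 p.2 = (t : ℤ))
  have hsub : {p ∈ gridBoxFinset s | max p.1 p.2 = (t : ℤ)} ⊆
      ({(t : ℤ)} ×ˢ Icc 1 (t : ℤ)) ∪ (Icc 1 (t : ℤ) ×ˢ {(t : ℤ)}) := by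
    intro p hp
    simp only [gridBoxFinset, mem_filter, mem_product, mem_Icc] at hp
    simp only [mem_union, mem_product, mem_singleton, mem_Icc]
    omega
  have hpath : #{p ∈ gridBoxFinset s | max p.1 p.2 = (t : ℤ)} ≤ 2 * t := by
    calc _ ≤ _ := card_le_card hsub
      _ ≤ _ := card_union_le _ _
      _ = 2 * t := by simp; ring
  rw [card_gridBoxFinset] at hsplit
  change s * s ≤ #{p ∈ gridBoxFinset s | ¬max p.1 p.2 = (t : ℤ)} + 2 * t
  omega

theorem natCard_reachable_gridCutCorner_le {s t : ℕ} (hts : t ≤ s)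
    (v : (gridCutCorner s t : Set (ℤ × ℤ))) :
    Nat.card {w : (gridCutCorner s t : Set (ℤ × ℤ)) //
      (kingGraph.induce (gridCutCorner s t : Set (ℤ × ℤ))).Reachable v w} ≤
        max (t * t) (s * s - t * t) := by
  have hmem (p : ℤ × ℤ) : p ∈ gridCutCorner s t ↔
      ((1 ≤ p.1 ∧ p.1 ≤ s) ∧ 1 ≤ p.2 ∧ p.2 ≤ s) ∧ max p.1 p.2 ≠ t := by
    simp [gridCutCorner, gridBoxFinset]
  have hinv : ∀ a ∈ (gridCutCorner s t : Set (ℤ × ℤ)), ∀ b ∈ (gridCutCorner s t : Set (ℤ × ℤ)),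
      kingGraph.Adj a b → (max a.1 a.2 < t) = (max b.1 b.2 < t) := by
    intro a ha b hb hab
    have hab' := (abs_max_sub_max_le_max a.1 a.2 b.1 b.2).trans
      (max_le (kingGraph_adj_abs_sub_le hab).1 (kingGraph_adj_abs_sub_le hab).2)
    have := ((hmem a).mp ha).2
    have := ((hmem b).mp hb).2
    rw [abs_le] at hab'
    exact propext (by omega)
  have hsq : Icc 1 (t : ℤ) ×ˢ Icc 1 (t : ℤ) ⊆ gridBoxFinset s :=
    product_subset_product (Icc_subset_Icc_right (by exact_mod_cast hts))
      (Icc_subset_Icc_right (by exact_mod_cast hts))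
  by_cases hv : max (v : ℤ × ℤ).1 (v : ℤ × ℤ).2 < t
  · refine le_max_of_le_left ?_
    calc _ ≤ #(Icc 1 (t : ℤ) ×ˢ Icc 1 (t : ℤ)) := by
          refine SimpleGraph.natCard_reachable_induce_le _ hinv v _ fun w hw hwv => ?_
          have := (hmem w).mp hw
          simp only [mem_product, mem_Icc]
          rw [eq_iff_iff] at hwv
          omega
      _ = t * t := by simp
  · refine le_max_of_le_right ?_
    calc _ ≤ #(gridBoxFinset s \ Icc 1 (t : ℤ) ×ˢ Icc 1 (t : ℤ)) := by
          refine SimpleGraph.natCard_reachable_induce_le _ hinv v _ fun w hw hwv => ?_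
          have := (hmem w).mp hw
          simp only [gridBoxFinset, Finset.mem_sdiff, mem_product, mem_Icc]
          rw [eq_iff_iff] at hwv
          omega
      _ = s * s - t * t := by
          rw [card_sdiff_of_subset hsq, card_gridBoxFinset, card_product, Int.card_Icc_one_natCast]

theorem exists_barrier_of_one_lt {K : ℝ} (hK : 1 < K) (s : ℕ) :
    ∃ H : Set (ℤ × ℤ), H ⊆ gridBox s ∧ (s : ℝ) ^ 2 - K * s ≤ (H.ncard : ℝ) ∧
      ∀ v : H, (Nat.card {w : H // (kingGraph.induce H).Reachable v w} : ℝ) ≤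
        aFun K * (s : ℝ) ^ 2 := by
  set m := ⌊K⌋₊
  have hmK : (m : ℝ) ≤ K := Nat.floor_le (by linarith)
  have haFun : aFun K = 1 / ((m : ℝ) + 1) := by
    rw [aFun, if_pos hK, ← Int.natCast_floor_eq_floor (by linarith), Int.cast_natCast]
  refine ⟨gridCutRows s (s / (m + 1) + 1), coe_subset_gridBox (filter_subset _ _), ?_,
    fun v => ?_⟩
  · have hcard : ((s * s : ℕ) : ℝ) ≤ #(gridCutRows s (s / (m + 1) + 1)) + m * s := by
      exact_mod_cast card_gridCutRows_add (Nat.lt_mul_div_succ s m.succ_pos)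
    rw [Set.ncard_coe_finset]
    push_cast at hcard
    nlinarith
  · calc _ ≤ ((s * (s / (m + 1)) : ℕ) : ℝ) :=
          Nat.cast_le.mpr ((natCard_reachable_gridCutRows_le (by positivity) v).trans_eq
            (by rw [Nat.add_sub_cancel]))
      _ ≤ s * (s / (m + 1) : ℝ) := by
          push_cast
          gcongr
          exact_mod_cast Nat.cast_div_le (α := ℝ) (m := s) (n := m + 1)
      _ = aFun K * (s : ℝ) ^ 2 := by rw [haFun]; ring

theorem exists_barrier_of_le_one {K ε : ℝ} (hK : K ≤ 1) (s : ℕ) (hKs : 2 ≤ K * s)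
    (hKε : K * s ≤ ε * s ^ 2) :
    ∃ H : Set (ℤ × ℤ), H ⊆ gridBox s ∧ (s : ℝ) ^ 2 - K * s ≤ (H.ncard : ℝ) ∧
      ∀ v : H, (Nat.card {w : H // (kingGraph.induce H).Reachable v w} : ℝ) ≤
        (aFun K + ε) * (s : ℝ) ^ 2 := by
  have hK0 : 0 < K := by
    by_contra! h
    nlinarith [mul_nonpos_of_nonpos_of_nonneg h (Nat.cast_nonneg (α := ℝ) s)]
  set t := ⌊K * s / 2⌋₊
  have ht_le : (t : ℝ) ≤ K * s / 2 := Nat.floor_le (by positivity)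
  have ht_ge : K * s / 2 - 1 ≤ t := by linarith [Nat.lt_floor_add_one (K * s / 2)]
  have hts : t ≤ s := by
    have : (t : ℝ) ≤ s := by nlinarith
    exact_mod_cast this
  have haFun : aFun K = 1 - (K / 2) ^ 2 := by rw [aFun, if_neg hK.not_gt]
  refine ⟨gridCutCorner s t, coe_subset_gridBox (filter_subset _ _), ?_, fun v => ?_⟩
  · have hcard : ((s * s : ℕ) : ℝ) ≤ #(gridCutCorner s t) + 2 * t := by
      exact_mod_cast card_gridCutCorner_add s t
    rw [Set.ncard_coe_finset]
    push_cast at hcard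
    nlinarith
  · have hcomp := (Nat.cast_le (α := ℝ)).mpr (natCard_reachable_gridCutCorner_le hts v)
    rw [Nat.cast_max, Nat.cast_sub (Nat.mul_le_mul hts hts)] at hcomp
    push_cast at hcomp
    refine hcomp.trans (max_le ?_ ?_) <;> rw [haFun]
    · have hK2 : K ^ 2 ≤ 1 := by nlinarith
      nlinarith [mul_le_mul ht_le ht_le (Nat.cast_nonneg t) (by positivity),
        mul_le_mul_of_nonneg_right hK2 (sq_nonneg (s : ℝ))]
    · nlinarith [mul_le_mul ht_ge ht_ge (by linarith) (Nat.cast_nonneg t)]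

theorem aFun_pos {K : ℝ} (hK : 0 < K) : 0 < aFun K := by
  unfold aFun
  split_ifs with h
  · positivity
  · nlinarith [not_lt.mp h]

theorem aFun_lt_one {K : ℝ} (hK : 0 < K) : aFun K < 1 := by
  unfold aFun
  split_ifs with h
  · have : (1 : ℝ) ≤ ⌊K⌋ := by exact_mod_cast Int.le_floor.mpr (by exact_mod_cast h.le)
    rw [div_lt_one (by linarith)]
    linarith
  · nlinarith

theorem tendsto_aFun_atTop : Tendsto aFun atTop (𝓝 0) := by
  refine tendsto_of_tendsto_of_tendsto_of_le_of_le' tendsto_const_nhds tendsto_inv_atTop_zero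
    ?_ ?_ <;> filter_upwards [eventually_gt_atTop (1 : ℝ)] with K hK
  · exact (aFun_pos (by linarith)).le
  · rw [aFun, if_pos hK, one_div]
    exact inv_anti₀ (by linarith) (Int.lt_floor_add_one K).le

/-- barrier lemma. For every `K > 0` and `ε > 0`, for all sufficiently
large `s` there is a set `H ⊆ {1,…,s}²` with `|H| ≥ s² − K·s` all of whose connected
components in the king's move grid have at most `(a(K)+ε)·s²` vertices. Moreover
`0 < a(K) < 1` for all `K > 0` and `a(K) → 0` as `K → ∞`. -/
theorem barrier_lemma :
    (∀ K : ℝ, 0 < K → ∀ ε : ℝ, 0 < ε → ∃ s₀ : ℕ, ∀ s : ℕ, s₀ ≤ s →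
      ∃ H : Set (ℤ × ℤ), H ⊆ gridBox s ∧ (s : ℝ)^2 - K * s ≤ (H.ncard : ℝ) ∧
        ∀ v : H, (Nat.card {w : H // (SimpleGraph.induce H kingGraph).Reachable v w} : ℝ)
          ≤ (aFun K + ε) * (s : ℝ)^2) ∧
    (∀ K : ℝ, 0 < K → 0 < aFun K ∧ aFun K < 1) ∧
    Tendsto aFun atTop (nhds 0) := by
  refine ⟨fun K hK ε hε => ⟨⌈2 / K⌉₊ + ⌈K / ε⌉₊, fun s hs => ?_⟩,
    fun K hK => ⟨aFun_pos hK, aFun_lt_one hK⟩, tendsto_aFun_atTop⟩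
  by_cases hK1 : 1 < K
  · obtain ⟨H, hH, hcard, hcomp⟩ := exists_barrier_of_one_lt hK1 s
    exact ⟨H, hH, hcard, fun v => (hcomp v).trans (by nlinarith [sq_nonneg (s : ℝ)])⟩
  · have h2K : 2 / K ≤ s := (Nat.le_ceil _).trans (by exact_mod_cast le_self_add.trans hs)
    have hKε : K / ε ≤ s := (Nat.le_ceil _).trans (by exact_mod_cast le_add_self.trans hs)
    rw [div_le_iff₀ hK] at h2K
    rw [div_le_iff₀ hε] at hKε
    exact exists_barrier_of_le_one (not_lt.mp hK1) s (by linarith)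
      (by nlinarith [Nat.cast_nonneg (α := ℝ) s])
end
end

section
/- For every finite set A ⊆ ℤ², the number of edges of the integer lattice graph with one endpoint in A and the other endpoint in ℤ²∖A is at least 4·√|A|. -/
open Filter Topology

noncomputable section

/-- Adjacency in the integer lattice graph: Euclidean distance exactly `1`. -/
def latticeAdj (p q : ℤ × ℤ) : Prop :=
  Real.sqrt (((p.1 - q.1 : ℤ) : ℝ)^2 + ((p.2 - q.2 : ℤ) : ℝ)^2) = 1

lemma latticeAdj_symm {p q : ℤ × ℤ} (h : latticeAdj p q) : latticeAdj q p := by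
  unfold latticeAdj at h ⊢
  have : (((q.1 - p.1 : ℤ) : ℝ)^2 + ((q.2 - p.2 : ℤ) : ℝ)^2)
      = (((p.1 - q.1 : ℤ) : ℝ)^2 + ((p.2 - q.2 : ℤ) : ℝ)^2) := by push_cast; ring
  rw [this]; exact h

lemma latticeAdj_irrefl (p : ℤ × ℤ) : ¬ latticeAdj p p := by
  unfold latticeAdj
  simp

/-- The integer lattice graph `ℤ²`. -/
def latticeGraph : SimpleGraph (ℤ × ℤ) where
  Adj p q := latticeAdj p q
  symm := ⟨fun _ _ h => latticeAdj_symm h⟩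
  loopless := ⟨latticeAdj_irrefl⟩

/-- `e(A, Aᶜ)`: the number of lattice edges with one endpoint in `A` and the other
outside `A` (counted as ordered pairs whose first coordinate lies in `A`, which counts
each such edge exactly once). -/
def eBnd (A : Set (ℤ × ℤ)) : ℕ :=
  Set.ncard {e : (ℤ × ℤ) × (ℤ × ℤ) | e.1 ∈ A ∧ e.2 ∉ A ∧ latticeAdj e.1 e.2}

/-!
Every column of `A` (a nonempty fibre of the first projection) has a topmost and a bottommost
point, and each of them is the lower, resp. upper, endpoint of a vertical boundary edge; likewise
every row yields two horizontal boundary edges. Hence `e(A, Aᶜ) ≥ 2 (c + r)`, where `c` and `r`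
count the columns and rows of `A`, while `|A| ≤ c r` because `A` lies in the product of its two
projections. By AM-GM, `4 √|A| ≤ 4 √(c r) ≤ 2 (c + r)`.
-/

open Finset

def unitVectors : Finset (ℤ × ℤ) := {(1, 0), (-1, 0), (0, 1), (0, -1)}

theorem sq_add_sq_eq_one_iff (a b : ℤ) : a ^ 2 + b ^ 2 = 1 ↔ (a, b) ∈ unitVectors := by
  constructor
  · intro h
    have ha : a ^ 2 ≤ 1 := by nlinarith [sq_nonneg b]
    have hb : b ^ 2 ≤ 1 := by nlinarith [sq_nonneg a]
    obtain ⟨ha₁, ha₂⟩ := abs_le.mp (sq_le_one_iff_abs_le_one a |>.mp ha)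
    obtain ⟨hb₁, hb₂⟩ := abs_le.mp (sq_le_one_iff_abs_le_one b |>.mp hb)
    interval_cases a <;> interval_cases b <;> simp_all [unitVectors]
  · simp only [unitVectors, Finset.mem_insert, Finset.mem_singleton, Prod.mk.injEq]
    rintro (⟨rfl, rfl⟩ | ⟨rfl, rfl⟩ | ⟨rfl, rfl⟩ | ⟨rfl, rfl⟩) <;> norm_num

theorem latticeAdj_iff_sub_mem_unitVectors (p q : ℤ × ℤ) :
    latticeAdj p q ↔ q - p ∈ unitVectors := by
  rw [latticeAdj, Real.sqrt_eq_one, show q - p = (q.1 - p.1, q.2 - p.2) from rfl,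
    ← sq_add_sq_eq_one_iff, sub_sq_comm q.1, sub_sq_comm q.2]
  norm_cast

theorem Set.Finite.exists_add_nsmul_mem_add_notMem {G : Type*} [AddLeftCancelMonoid G]
    {s : Set G} (hs : s.Finite) {p v : G} (hp : p ∈ s) (hv : ¬IsOfFinAddOrder v) :
    ∃ n : ℕ, p + n • v ∈ s ∧ p + n • v + v ∉ s := by
  have hinj : (fun n : ℕ ↦ p + n • v).Injective :=
    (add_right_injective p).comp (injective_nsmul_iff_not_isOfFinAddOrder.mpr hv)
  have hexit : ∃ n : ℕ, p + n • v ∉ s := by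
    by_contra! hstay
    exact Set.infinite_univ <| (hs.preimage hinj.injOn).subset fun n _ ↦ hstay n
  classical
  have hfirst := Nat.find_spec hexit
  obtain ⟨n, hn⟩ : ∃ n, Nat.find hexit = n + 1 :=
    Nat.exists_eq_add_one.mpr ((Nat.find_pos hexit).mpr (by simpa using hp))
  refine ⟨n, not_not.mp (Nat.find_min hexit (hn ▸ n.lt_succ_self)), ?_⟩
  rwa [hn, succ_nsmul, ← add_assoc] at hfirst

theorem Finset.card_image_le_card_filter_add_notMem {G H : Type*} [AddCancelCommMonoid G]
    [AddMonoid H] [DecidableEq G] [DecidableEq H] (f : G →+ H) (s : Finset G)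
    {v : G} (hv : ¬IsOfFinAddOrder v) (hfv : f v = 0) :
    #(s.image f) ≤ #{p ∈ s | p + v ∉ s} := by
  calc #(s.image f) ≤ #({p ∈ s | p + v ∉ s}.image f) := by
        refine card_le_card fun x hx ↦ ?_
        obtain ⟨p, hp, rfl⟩ := mem_image.mp hx
        obtain ⟨n, hmem, hnotMem⟩ := s.finite_toSet.exists_add_nsmul_mem_add_notMem hp hv
        exact mem_image.mpr ⟨p + n • v, mem_filter.mpr ⟨hmem, hnotMem⟩, by simp [hfv]⟩
    _ ≤ #{p ∈ s | p + v ∉ s} := card_image_le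

theorem eBnd_coe_eq_sum (s : Finset (ℤ × ℤ)) :
    eBnd ↑s = ∑ v ∈ unitVectors, #{p ∈ s | p + v ∉ s} := by
  have hboundary :
      {e : (ℤ × ℤ) × (ℤ × ℤ) | e.1 ∈ (s : Set (ℤ × ℤ)) ∧ e.2 ∉ (s : Set (ℤ × ℤ)) ∧
        latticeAdj e.1 e.2} =
      ↑(unitVectors.biUnion fun v ↦ {p ∈ s | p + v ∉ s}.image fun p ↦ (p, p + v)) := by
    ext ⟨p, q⟩
    simp only [latticeAdj_iff_sub_mem_unitVectors, Set.mem_ofPred_eq, coe_biUnion, coe_image,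
      coe_filter, Set.mem_iUnion, Set.mem_image, Prod.mk.injEq, mem_coe]
    constructor
    · rintro ⟨hp, hq, hqp⟩
      exact ⟨q - p, hqp, p, ⟨hp, by simpa using hq⟩, rfl, by abel⟩
    · rintro ⟨v, hv, p, ⟨hp, hpv⟩, rfl, rfl⟩
      exact ⟨hp, hpv, by simpa using hv⟩
  rw [eBnd, hboundary, Set.ncard_coe_finset, card_biUnion]
  · exact sum_congr rfl fun v _ ↦ card_image_of_injective _ fun p p' h ↦ congrArg Prod.fst h
  · intro v _ w _ hvw
    simp only [Function.onFun, disjoint_left, mem_image, not_exists, not_and]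
    rintro _ ⟨p, -, rfl⟩ p' - h
    simp only [Prod.mk.injEq] at h
    exact hvw (by simpa [h.1] using h.2.symm)

theorem two_mul_card_image_fst_add_card_image_snd_le_eBnd (s : Finset (ℤ × ℤ)) :
    2 * (#(s.image Prod.fst) + #(s.image Prod.snd)) ≤ eBnd ↑s := by
  have hup := s.card_image_le_card_filter_add_notMem (AddMonoidHom.fst ℤ ℤ)
    (v := (0, 1)) (not_isOfFinAddOrder_of_isAddTorsionFree (by decide)) rfl
  have hdown := s.card_image_le_card_filter_add_notMem (AddMonoidHom.fst ℤ ℤ)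
    (v := (0, -1)) (not_isOfFinAddOrder_of_isAddTorsionFree (by decide)) rfl
  have hright := s.card_image_le_card_filter_add_notMem (AddMonoidHom.snd ℤ ℤ)
    (v := (1, 0)) (not_isOfFinAddOrder_of_isAddTorsionFree (by decide)) rfl
  have hleft := s.card_image_le_card_filter_add_notMem (AddMonoidHom.snd ℤ ℤ)
    (v := (-1, 0)) (not_isOfFinAddOrder_of_isAddTorsionFree (by decide)) rfl
  rw [eBnd_coe_eq_sum, unitVectors, sum_insert (by decide), sum_insert (by decide),
    sum_pair (by decide)]
  simp only [AddMonoidHom.coe_fst, AddMonoidHom.coe_snd] at hup hdown hright hleft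
  omega

theorem four_mul_sqrt_le_two_mul_add {n c r : ℝ} (hc : 0 ≤ c) (hr : 0 ≤ r) (h : n ≤ c * r) :
    4 * √n ≤ 2 * (c + r) := by
  have hamgm : √n ≤ (c + r) / 2 :=
    Real.sqrt_le_iff.mpr ⟨by positivity, by nlinarith [sq_nonneg (c - r)]⟩
  linarith

/-- isoperimetric inequality. For every finite `A ⊆ ℤ²`,
`e(A, Aᶜ) ≥ 4·√|A|`. -/
theorem lattice_isoperimetric (A : Set (ℤ × ℤ)) (hA : A.Finite) :
    4 * Real.sqrt (A.ncard : ℝ) ≤ (eBnd A : ℝ) := by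
  obtain ⟨s, rfl⟩ := hA.exists_finset_coe
  have hcard : #s ≤ #(s.image Prod.fst) * #(s.image Prod.snd) :=
    (card_le_card subset_product).trans (card_product _ _).le
  have hboundary := two_mul_card_image_fst_add_card_image_snd_le_eBnd s
  rw [Set.ncard_coe_finset]
  refine (four_mul_sqrt_le_two_mul_add (Nat.cast_nonneg _) (Nat.cast_nonneg _)
    (by exact_mod_cast hcard)).trans ?_
  exact_mod_cast hboundary

end
end

section
/- Let x > 0 be a real number, and let A ⊆ ℤ² be a finite set such that every connected component of the subgraph of the integer lattice graph induced by A has at most x vertices. Then e(A, Aᶜ) ≥ 4·|A|/√x. -/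
open Filter Topology

noncomputable section

/-! A finite `B ⊆ ℤ²` meeting `r` rows and `k` columns has at least `2r + 2k ≥ 4√(rk) ≥ 4√|B|`
boundary edges, since every row and every column it meets contributes one at each end.
A connected component `C` of `A` has no lattice edges to `A \ C`, so `e(A, Aᶜ)` is the sum of
the `e(C, Cᶜ)`, and `4√|C| ≥ 4|C|/√x` when `|C| ≤ x`. -/

open Finset

def latticeUnitVectors : Finset (ℤ × ℤ) := {(1, 0), (-1, 0), (0, 1), (0, -1)}

lemma sq_add_sq_eq_one_iff_s6 {u v : ℤ} : u ^ 2 + v ^ 2 = 1 ↔ (u, v) ∈ latticeUnitVectors := by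
  simp only [latticeUnitVectors, mem_insert, mem_singleton, Prod.mk.injEq]
  constructor
  · intro h
    have hu₁ : -1 ≤ u := by nlinarith [sq_nonneg v]
    have hu₂ : u ≤ 1 := by nlinarith [sq_nonneg v]
    have hv₁ : -1 ≤ v := by nlinarith [sq_nonneg u]
    have hv₂ : v ≤ 1 := by nlinarith [sq_nonneg u]
    interval_cases u <;> interval_cases v <;> simp_all
  · rintro (⟨rfl, rfl⟩ | ⟨rfl, rfl⟩ | ⟨rfl, rfl⟩ | ⟨rfl, rfl⟩) <;> norm_num

lemma latticeAdj_iff_sub_mem {p q : ℤ × ℤ} : latticeAdj p q ↔ q - p ∈ latticeUnitVectors := by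
  have hcast : ((p.1 - q.1 : ℤ) : ℝ) ^ 2 + ((p.2 - q.2 : ℤ) : ℝ) ^ 2
      = (((q.1 - p.1) ^ 2 + (q.2 - p.2) ^ 2 : ℤ) : ℝ) := by push_cast; ring
  rw [latticeAdj, Real.sqrt_eq_one, hcast, Int.cast_eq_one, sq_add_sq_eq_one_iff_s6]
  rfl

lemma exists_mem_add_notMem {s : Finset (ℤ × ℤ)} (hs : s.Nonempty) {d : ℤ × ℤ} (hd : d ≠ 0) :
    ∃ p ∈ s, p + d ∉ s := by
  -- a maximiser `p` of `⟪·, d⟫` on `s`, since `⟪p + d, d⟫ = ⟪p, d⟫ + ‖d‖²`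
  obtain ⟨p, hp, hmax⟩ := s.exists_max_image (fun p => p.1 * d.1 + p.2 * d.2) hs
  refine ⟨p, hp, fun hpd => hd ?_⟩
  have hle := hmax _ hpd
  simp only [Prod.fst_add, Prod.snd_add] at hle
  have hsq : d.1 * d.1 + d.2 * d.2 ≤ 0 := by linarith
  obtain ⟨h₁, h₂⟩ := mul_self_add_mul_self_eq_zero.1
    (hsq.antisymm (add_nonneg (mul_self_nonneg _) (mul_self_nonneg _)))
  exact Prod.ext h₁ h₂

lemma card_image_le_card_filter_add_notMem {β : Type*} [DecidableEq β] (s : Finset (ℤ × ℤ))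
    {d : ℤ × ℤ} (hd : d ≠ 0) {π : ℤ × ℤ → β} (hπ : ∀ p, π (p + d) = π p) :
    #(s.image π) ≤ #{p ∈ s | p + d ∉ s} := by
  refine card_le_card_of_surjOn π fun y hy => ?_
  obtain ⟨p, hp, hpd⟩ := exists_mem_add_notMem (s := {p ∈ s | π p = y})
    (by simpa [Finset.Nonempty] using hy) hd
  rw [mem_filter] at hp
  exact ⟨p, mem_filter.2 ⟨hp.1, fun h => hpd (mem_filter.2 ⟨h, (hπ p).trans hp.2⟩)⟩, hp.2⟩

def latticeEdgeBoundary (A : Set (ℤ × ℤ)) : Set ((ℤ × ℤ) × (ℤ × ℤ)) :=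
  {e | e.1 ∈ A ∧ e.2 ∉ A ∧ latticeAdj e.1 e.2}

lemma eBnd_eq_ncard_latticeEdgeBoundary (A : Set (ℤ × ℤ)) :
    eBnd A = (latticeEdgeBoundary A).ncard := rfl

lemma latticeEdgeBoundary_coe_finset (s : Finset (ℤ × ℤ)) :
    latticeEdgeBoundary s =
      ↑({pd ∈ s ×ˢ latticeUnitVectors | pd.1 + pd.2 ∉ s}.image fun pd => (pd.1, pd.1 + pd.2)) := by
  ext ⟨p, q⟩
  simp only [latticeEdgeBoundary, latticeAdj_iff_sub_mem, Set.mem_ofPred_eq, coe_image, coe_filter,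
    mem_product, Set.mem_image, Prod.mk.injEq]
  constructor
  · rintro ⟨hp, hq, hqp⟩
    exact ⟨(p, q - p), ⟨⟨hp, hqp⟩, by simpa using hq⟩, rfl, add_sub_cancel p q⟩
  · rintro ⟨⟨p, d⟩, ⟨⟨hp, hd⟩, hpd⟩, rfl, rfl⟩
    exact ⟨hp, hpd, by simpa using hd⟩

lemma eBnd_coe_finset (s : Finset (ℤ × ℤ)) :
    eBnd s = ∑ d ∈ latticeUnitVectors, #{p ∈ s | p + d ∉ s} := by
  have hinj : Function.Injective fun pd : (ℤ × ℤ) × (ℤ × ℤ) => (pd.1, pd.1 + pd.2) := by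
    intro _ _ h
    obtain ⟨h₁, h₂⟩ := Prod.mk.inj h
    exact Prod.ext h₁ (add_left_cancel (h₁ ▸ h₂))
  rw [eBnd_eq_ncard_latticeEdgeBoundary, latticeEdgeBoundary_coe_finset, Set.ncard_coe_finset,
    card_image_of_injective _ hinj, card_filter, sum_product_right]
  simp only [card_filter]

lemma latticeEdgeBoundary_finite {A : Set (ℤ × ℤ)} (hA : A.Finite) :
    (latticeEdgeBoundary A).Finite := by
  obtain ⟨s, rfl⟩ := hA.exists_finset_coe
  rw [latticeEdgeBoundary_coe_finset]
  exact Finset.finite_toSet _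

lemma four_mul_sqrt_le_of_le_mul {n a b : ℝ} (ha : 0 ≤ a) (hb : 0 ≤ b) (h : n ≤ a * b) :
    4 * √n ≤ 2 * (a + b) := by
  have hamgm := two_mul_le_add_sq √a √b
  rw [Real.sq_sqrt ha, Real.sq_sqrt hb] at hamgm
  calc 4 * √n ≤ 4 * (√a * √b) := by rw [← Real.sqrt_mul ha]; gcongr
    _ ≤ 2 * (a + b) := by linarith

lemma four_mul_sqrt_card_le_eBnd (s : Finset (ℤ × ℤ)) : 4 * √(#s : ℝ) ≤ eBnd s := by
  have hE := card_image_le_card_filter_add_notMem s (d := (1, 0)) (by decide) (π := Prod.snd)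
    fun _ => by simp
  have hW := card_image_le_card_filter_add_notMem s (d := (-1, 0)) (by decide) (π := Prod.snd)
    fun _ => by simp
  have hN := card_image_le_card_filter_add_notMem s (d := (0, 1)) (by decide) (π := Prod.fst)
    fun _ => by simp
  have hS := card_image_le_card_filter_add_notMem s (d := (0, -1)) (by decide) (π := Prod.fst)
    fun _ => by simp
  have hsize : (#s : ℝ) ≤ #(s.image Prod.fst) * #(s.image Prod.snd) := by
    exact_mod_cast (card_le_card subset_product).trans (card_product _ _).le
  have := four_mul_sqrt_le_of_le_mul (by positivity) (by positivity) hsize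
  rw [eBnd_coe_finset, latticeUnitVectors, sum_insert (by decide), sum_insert (by decide),
    sum_insert (by decide), sum_singleton]
  push_cast
  linarith [(Nat.cast_le (α := ℝ)).2 hE, (Nat.cast_le (α := ℝ)).2 hW,
    (Nat.cast_le (α := ℝ)).2 hN, (Nat.cast_le (α := ℝ)).2 hS]

lemma eBnd_eq_add_eBnd_sdiff {A C : Set (ℤ × ℤ)} (hA : A.Finite) (hCA : C ⊆ A)
    (hC : ∀ p ∈ C, ∀ q ∈ A, latticeAdj p q → q ∈ C) :
    eBnd A = eBnd C + eBnd (A \ C) := by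
  have hsplit : latticeEdgeBoundary A = latticeEdgeBoundary C ∪ latticeEdgeBoundary (A \ C) := by
    ext ⟨p, q⟩
    simp only [latticeEdgeBoundary, Set.mem_union, Set.mem_ofPred_eq, Set.mem_sdiff]
    constructor
    · rintro ⟨hp, hq, hpq⟩
      by_cases hpC : p ∈ C
      · exact .inl ⟨hpC, fun h => hq (hCA h), hpq⟩
      · exact .inr ⟨⟨hp, hpC⟩, fun h => hq h.1, hpq⟩
    · rintro (⟨hp, hq, hpq⟩ | ⟨⟨hp, hpC⟩, hq, hpq⟩)
      · exact ⟨hCA hp, fun h => hq (hC p hp q h hpq), hpq⟩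
      · exact ⟨hp, fun h => hq ⟨h, fun hqC => hpC (hC q hqC p hp (latticeAdj_symm hpq))⟩, hpq⟩
  have hdisj : Disjoint (latticeEdgeBoundary C) (latticeEdgeBoundary (A \ C)) :=
    Set.disjoint_left.2 fun _ h h' => h'.1.2 h.1
  simp only [eBnd_eq_ncard_latticeEdgeBoundary]
  rw [hsplit, Set.ncard_union_eq hdisj (latticeEdgeBoundary_finite (hA.subset hCA))
    (latticeEdgeBoundary_finite hA.sdiff)]

def latticeComponent (A : Set (ℤ × ℤ)) (a : A) : Set (ℤ × ℤ) :=
  Subtype.val '' {b | (latticeGraph.induce A).Reachable a b}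

lemma latticeComponent_subset (A : Set (ℤ × ℤ)) (a : A) : latticeComponent A a ⊆ A := by
  rintro _ ⟨b, -, rfl⟩
  exact b.2

lemma mem_latticeComponent_self (A : Set (ℤ × ℤ)) (a : A) : ↑a ∈ latticeComponent A a :=
  ⟨a, .refl a, rfl⟩

lemma ncard_latticeComponent (A : Set (ℤ × ℤ)) (a : A) :
    (latticeComponent A a).ncard = Nat.card {b : A // (latticeGraph.induce A).Reachable a b} := by
  rw [latticeComponent, Set.ncard_image_of_injective _ Subtype.val_injective,
    ← Nat.card_coe_set_eq]
  rfl

lemma mem_latticeComponent_of_adj {A : Set (ℤ × ℤ)} {a : A} {p q : ℤ × ℤ}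
    (hp : p ∈ latticeComponent A a) (hq : q ∈ A) (hpq : latticeAdj p q) :
    q ∈ latticeComponent A a := by
  obtain ⟨b, hb, rfl⟩ := hp
  exact ⟨⟨q, hq⟩, hb.trans (SimpleGraph.Adj.reachable hpq), rfl⟩

lemma latticeComponent_mono {A B : Set (ℤ × ℤ)} (h : B ⊆ A) (b : B) :
    latticeComponent B b ⊆ latticeComponent A (Set.inclusion h b) := by
  rintro _ ⟨c, hc, rfl⟩
  exact ⟨Set.inclusion h c, hc.map (latticeGraph.induceHomOfLE h).toHom, rfl⟩

lemma div_sqrt_le_sqrt_of_le {c x : ℝ} (hc : 0 ≤ c) (hcx : c ≤ x) : c / √x ≤ √c := by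
  obtain rfl | hc := hc.eq_or_lt
  · simp
  calc c / √x ≤ c / √c := by gcongr
    _ = √c := Real.div_sqrt

theorem four_mul_ncard_div_sqrt_le_eBnd {x : ℝ} {A : Set (ℤ × ℤ)} (hA : A.Finite)
    (hcomp : ∀ a : A, ((latticeComponent A a).ncard : ℝ) ≤ x) :
    4 * (A.ncard : ℝ) / √x ≤ eBnd A := by
  induction hn : A.ncard using Nat.strong_induction_on generalizing A with
  | _ n ih =>
  obtain rfl | ⟨a, ha⟩ := A.eq_empty_or_nonempty
  · simp [← hn]
  set C := latticeComponent A ⟨a, ha⟩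
  have hCA : C ⊆ A := latticeComponent_subset A _
  have hrest : 4 * ((A \ C).ncard : ℝ) / √x ≤ eBnd (A \ C) := by
    refine ih _ ?_ hA.sdiff (fun b => ?_) rfl
    · exact hn ▸ Set.ncard_lt_ncard (Set.sdiff_ssubset_left_iff.2
        ⟨a, ha, mem_latticeComponent_self A ⟨a, ha⟩⟩) hA
    · exact (Nat.cast_le.2 (Set.ncard_le_ncard (latticeComponent_mono Set.sdiff_subset b)
        (hA.subset (latticeComponent_subset A _)))).trans (hcomp _)
  have hC : 4 * (C.ncard : ℝ) / √x ≤ eBnd C := by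
    obtain ⟨c, hc⟩ := (hA.subset hCA).exists_finset_coe
    calc 4 * (C.ncard : ℝ) / √x = 4 * (C.ncard / √x) := mul_div_assoc ..
      _ ≤ 4 * √(C.ncard : ℝ) := by gcongr; exact div_sqrt_le_sqrt_of_le (by positivity) (hcomp _)
      _ ≤ eBnd C := by rw [← hc, Set.ncard_coe_finset]; exact four_mul_sqrt_card_le_eBnd c
  rw [← hn,
    eBnd_eq_add_eBnd_sdiff hA hCA fun _ hp _ hq hpq => mem_latticeComponent_of_adj hp hq hpq,
    ← Set.ncard_sdiff_add_ncard_of_subset hCA hA]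
  push_cast
  rw [mul_add, add_div]
  linarith

theorem lattice_isoperimetric_small_components_general (x : ℝ)
    (A : Set (ℤ × ℤ)) (hA : A.Finite)
    (hcomp : ∀ a : A,
      (Nat.card {b : A // (SimpleGraph.induce A latticeGraph).Reachable a b} : ℝ) ≤ x) :
    4 * (A.ncard : ℝ) / Real.sqrt x ≤ (eBnd A : ℝ) :=
  four_mul_ncard_div_sqrt_le_eBnd hA fun a => by rw [ncard_latticeComponent]; exact hcomp a

/-- If every connected component of the subgraph of the integer lattice
induced by a finite set `A ⊆ ℤ²` has at most `x` vertices, then `e(A, Aᶜ) ≥ 4·|A|/√x`. -/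
theorem lattice_isoperimetric_small_components (x : ℝ) (hx : 0 < x)
    (A : Set (ℤ × ℤ)) (hA : A.Finite)
    (hcomp : ∀ a : A,
      (Nat.card {b : A // (SimpleGraph.induce A latticeGraph).Reachable a b} : ℝ) ≤ x) :
    4 * (A.ncard : ℝ) / Real.sqrt x ≤ (eBnd A : ℝ) :=
  lattice_isoperimetric_small_components_general x A hA hcomp

end
end

section
/- Let α, β > 0 be real numbers and s ∈ ℕ. Let H ⊆ {1,…,s}² with |H| ≥ s² − α·s, and let H_β be the union of all connected components of the subgraph of the grid graph induced by H that have at most β·s² vertices. Then |H_β| ≤ √β·(1+α)·s². -/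
/-!
Every finite `C ⊆ ℤ²` lies in the product of its sets of columns and rows, so `|C| ≤ w h`. If `C`
is a component of `H`, the top point of each of its columns has its upper neighbour outside `H`,
and the rightmost point of each row its right neighbour; shifting all such points of `H` up
(right) lands in `{1,…,s}² \ H` or in the line just outside the box, so there are at most
`αs + s` of each kind. A component with `|C| ≤ βs²` has `|C|² ≤ βs² · w h ≤ βs² ((w + h)/2)²`,
and summing `|C| ≤ √β s (w + h)/2` over the small components gives `|H_β| ≤ √β (1 + α) s²`.
-/

open Filter Topology

noncomputable section

open Finset in
theorem Set.ncard_le_of_ncard_fiber_le {α ι : Type*} {f : α → ι} {S A B : Set α}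
    (hS : S.Finite) (hA : A.Finite) (hB : B.Finite) {c : ℝ} (hc : 0 ≤ c)
    (h : ∀ p ∈ S, ((S ∩ f ⁻¹' {f p}).ncard : ℝ)
      ≤ c * ((A ∩ f ⁻¹' {f p}).ncard + (B ∩ f ⁻¹' {f p}).ncard)) :
    (S.ncard : ℝ) ≤ c * (A.ncard + B.ncard) := by
  classical
  lift S to Finset α using hS
  lift A to Finset α using hA
  lift B to Finset α using hB
  have fiber (T : Finset α) (i : ι) :
      ((T : Set α) ∩ f ⁻¹' {i}).ncard = #{q ∈ T | f q = i} := by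
    rw [← Set.ncard_coe_finset, Finset.coe_filter]; rfl
  simp only [fiber, Set.ncard_coe_finset] at h ⊢
  set t := S.image f
  calc (#S : ℝ) = ∑ i ∈ t, (#{q ∈ S | f q = i} : ℝ) := by
        exact_mod_cast Finset.card_eq_sum_card_image f S
    _ ≤ ∑ i ∈ t, c * ((#{q ∈ A | f q = i} : ℝ) + #{q ∈ B | f q = i}) := by
        refine Finset.sum_le_sum fun i hi => ?_
        obtain ⟨p, hp, rfl⟩ := Finset.mem_image.mp hi
        exact h p hp
    _ = c * ((#{q ∈ A | f q ∈ t} : ℝ) + #{q ∈ B | f q ∈ t}) := by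
        rw [← Finset.mul_sum, Finset.sum_add_distrib, ← Finset.sum_card_fiberwise_eq_card_filter,
          ← Finset.sum_card_fiberwise_eq_card_filter]
        push_cast; rfl
    _ ≤ c * (#A + #B) := by
        gcongr <;> exact Finset.filter_subset _ _

theorem le_mul_add_div_two_of_le_mul_of_le_sq {n w h b : ℝ} (hw : 0 ≤ w) (hh : 0 ≤ h)
    (hb : 0 ≤ b) (hnwh : n ≤ w * h) (hnb : n ≤ b ^ 2) : n ≤ b * ((w + h) / 2) := by
  rcases le_or_gt n 0 with hn | hn
  · exact hn.trans (by positivity)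
  refine le_of_pow_le_pow_left₀ two_ne_zero (by positivity) ?_
  calc n ^ 2 = n * n := sq n
    _ ≤ w * h * b ^ 2 := mul_le_mul hnwh hnb hn.le (by positivity)
    _ ≤ (b * ((w + h) / 2)) ^ 2 := by nlinarith [sq_nonneg (w - h), sq_nonneg b]

namespace SimpleGraph

variable {V : Type*} (G : SimpleGraph V) (H : Set V)

def inducedComponent (p : V) : Set V :=
  {q | ∃ (hp : p ∈ H) (hq : q ∈ H), (G.induce H).Reachable ⟨p, hp⟩ ⟨q, hq⟩}

variable {G H} {p q r : V}

theorem inducedComponent_subset : G.inducedComponent H p ⊆ H :=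
  fun _ ⟨_, hq, _⟩ => hq

theorem mem_inducedComponent_self (hp : p ∈ H) : p ∈ G.inducedComponent H p :=
  ⟨hp, hp, .rfl⟩

theorem inducedComponent_eq_of_mem (hq : q ∈ G.inducedComponent H p) :
    G.inducedComponent H q = G.inducedComponent H p := by
  obtain ⟨hp, hq, hpq⟩ := hq
  ext r
  exact ⟨fun ⟨_, hr, hqr⟩ => ⟨hp, hr, hpq.trans hqr⟩,
    fun ⟨_, hr, hpr⟩ => ⟨hq, hr, hpq.symm.trans hpr⟩⟩

theorem mem_inducedComponent_of_adj (hq : q ∈ G.inducedComponent H p) (hr : r ∈ H)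
    (hqr : G.Adj q r) : r ∈ G.inducedComponent H p := by
  obtain ⟨hp, hq, hpq⟩ := hq
  exact ⟨hp, hr, hpq.trans (Adj.reachable (G := G.induce H) (u := ⟨q, hq⟩) (v := ⟨r, hr⟩) hqr)⟩

theorem inter_preimage_inducedComponent {A : Set V} (hA : A ⊆ H) :
    A ∩ G.inducedComponent H ⁻¹' {G.inducedComponent H p} = A ∩ G.inducedComponent H p := by
  ext q
  refine and_congr_right fun hqA => ⟨fun hq => ?_, inducedComponent_eq_of_mem⟩
  exact (hq : G.inducedComponent H q = _) ▸ mem_inducedComponent_self (hA hqA)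

theorem natCard_reachable_eq_ncard_inducedComponent (hp : p ∈ H) :
    Nat.card {q : H // (G.induce H).Reachable ⟨p, hp⟩ q} = (G.inducedComponent H p).ncard := by
  have : G.inducedComponent H p = Subtype.val '' {q : H | (G.induce H).Reachable ⟨p, hp⟩ q} := by
    ext q
    exact ⟨fun ⟨_, hq, hpq⟩ => ⟨⟨q, hq⟩, hpq, rfl⟩, fun ⟨⟨_, hq⟩, hpq, rfl⟩ => ⟨hp, hq, hpq⟩⟩
  rw [this, Set.ncard_image_of_injective _ Subtype.val_injective, ← Nat.card_coe_set_eq]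
  rfl

end SimpleGraph

def topExposed {α : Type*} (C : Set (α × ℤ)) : Set (α × ℤ) := {p ∈ C | (p.1, p.2 + 1) ∉ C}

def rightExposed {β : Type*} (C : Set (ℤ × β)) : Set (ℤ × β) := {p ∈ C | (p.1 + 1, p.2) ∉ C}

theorem topExposed_subset {α : Type*} (C : Set (α × ℤ)) : topExposed C ⊆ C := Set.sep_subset _ _

theorem rightExposed_subset {β : Type*} (C : Set (ℤ × β)) : rightExposed C ⊆ C :=
  Set.sep_subset _ _

theorem image_fst_subset_image_fst_topExposed {α : Type*} {C : Set (α × ℤ)} (hC : C.Finite) :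
    Prod.fst '' C ⊆ Prod.fst '' topExposed C := by
  rintro _ ⟨⟨x, y₀⟩, hy₀, rfl⟩
  have hcol : {y | (x, y) ∈ C}.Finite := hC.preimage (Prod.mk_right_injective x).injOn
  obtain ⟨y, hy, hmax⟩ := hcol.exists_maximal ⟨y₀, hy₀⟩
  refine ⟨(x, y), ⟨hy, fun hy' => ?_⟩, rfl⟩
  have := hmax (show y + 1 ∈ {y | (x, y) ∈ C} from hy') (by omega)
  omega

theorem ncard_image_fst_le_ncard_topExposed {α : Type*} {C : Set (α × ℤ)} (hC : C.Finite) :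
    (Prod.fst '' C).ncard ≤ (topExposed C).ncard :=
  (Set.ncard_le_ncard (image_fst_subset_image_fst_topExposed hC)
    ((hC.subset (topExposed_subset C)).image _)).trans
    (Set.ncard_image_le (hC.subset (topExposed_subset C)))

theorem topExposed_preimage_swap {β : Type*} (C : Set (ℤ × β)) :
    topExposed (Prod.swap ⁻¹' C) = Prod.swap ⁻¹' rightExposed C := rfl

theorem ncard_image_snd_le_ncard_rightExposed {β : Type*} {C : Set (ℤ × β)} (hC : C.Finite) :
    (Prod.snd '' C).ncard ≤ (rightExposed C).ncard := by
  have h := ncard_image_fst_le_ncard_topExposed (hC.preimage Prod.swap_injective.injOn)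
  rwa [topExposed_preimage_swap, ← Set.image_swap_eq_preimage_swap,
    Set.ncard_image_of_injective _ Prod.swap_injective,
    ← Set.image_comp] at h

theorem ncard_le_ncard_topExposed_mul_ncard_rightExposed {C : Set (ℤ × ℤ)} (hC : C.Finite) :
    C.ncard ≤ (topExposed C).ncard * (rightExposed C).ncard :=
  calc C.ncard ≤ ((Prod.fst '' C) ×ˢ (Prod.snd '' C)).ncard :=
        Set.ncard_le_ncard (fun p hp => ⟨⟨p, hp, rfl⟩, ⟨p, hp, rfl⟩⟩)
          ((hC.image _).prod (hC.image _))
    _ = (Prod.fst '' C).ncard * (Prod.snd '' C).ncard := Set.ncard_prod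
    _ ≤ (topExposed C).ncard * (rightExposed C).ncard :=
        Nat.mul_le_mul (ncard_image_fst_le_ncard_topExposed hC)
          (ncard_image_snd_le_ncard_rightExposed hC)

theorem Set.ncard_sep_apply_notMem_le {α : Type*} {τ : α → α} (hτ : τ.Injective) {H D : Set α}
    (hHD : H ⊆ D) (hD : D.Finite) :
    {p ∈ H | τ p ∉ H}.ncard ≤ (D \ H).ncard + (τ '' D \ D).ncard := by
  have hmaps : τ '' {p ∈ H | τ p ∉ H} ⊆ (D \ H) ∪ (τ '' D \ D) := by
    rintro _ ⟨p, ⟨hpH, hτp⟩, rfl⟩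
    by_cases hτD : τ p ∈ D
    · exact .inl ⟨hτD, hτp⟩
    · exact .inr ⟨⟨p, hHD hpH, rfl⟩, hτD⟩
  calc {p ∈ H | τ p ∉ H}.ncard = (τ '' {p ∈ H | τ p ∉ H}).ncard :=
        (Set.ncard_image_of_injective _ hτ).symm
    _ ≤ ((D \ H) ∪ (τ '' D \ D)).ncard :=
        Set.ncard_le_ncard hmaps (hD.sdiff.union (hD.image τ).sdiff)
    _ ≤ (D \ H).ncard + (τ '' D \ D).ncard := Set.ncard_union_le _ _

theorem ncard_Icc_one_int (s : ℕ) : (Set.Icc (1 : ℤ) s).ncard = s := by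
  rw [← Finset.coe_Icc, Set.ncard_coe_finset, Int.card_Icc]
  omega

theorem gridBox_finite (s : ℕ) : (gridBox s).Finite :=
  (Set.finite_Icc _ _).prod (Set.finite_Icc _ _)

theorem ncard_gridBox (s : ℕ) : (gridBox s).ncard = s ^ 2 := by
  rw [gridBox, Set.ncard_prod, ncard_Icc_one_int, sq]

theorem ncard_topExposed_le {s : ℕ} {H : Set (ℤ × ℤ)} (hH : H ⊆ gridBox s) :
    (topExposed H).ncard ≤ (gridBox s \ H).ncard + s := by
  have hup : (fun p : ℤ × ℤ => (p.1, p.2 + 1)).Injective := fun a b h => by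
    simp only [Prod.mk.injEq, add_left_inj] at h
    exact Prod.ext h.1 h.2
  refine (Set.ncard_sep_apply_notMem_le hup hH (gridBox_finite s)).trans ?_
  gcongr
  calc _ ≤ (Set.Icc (1 : ℤ) s ×ˢ {(s : ℤ) + 1}).ncard :=
        Set.ncard_le_ncard ?_ ((Set.finite_Icc _ _).prod (Set.finite_singleton _))
    _ = s := by rw [Set.ncard_prod, ncard_Icc_one_int, Set.ncard_singleton, mul_one]
  rintro _ ⟨⟨p, hp, rfl⟩, hout⟩
  simp only [gridBox, Set.mem_prod, Set.mem_Icc, Set.mem_singleton_iff] at hp hout ⊢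
  omega

theorem ncard_rightExposed_le {s : ℕ} {H : Set (ℤ × ℤ)} (hH : H ⊆ gridBox s) :
    (rightExposed H).ncard ≤ (gridBox s \ H).ncard + s := by
  have hbox : Prod.swap ⁻¹' gridBox s = gridBox s := Set.preimage_swap_prod _ _
  have h := ncard_topExposed_le (H := Prod.swap ⁻¹' H) (hbox ▸ Set.preimage_mono hH)
  rwa [topExposed_preimage_swap, ← hbox, ← Set.preimage_sdiff, ← Set.image_swap_eq_preimage_swap,
    Set.ncard_image_of_injective _ Prod.swap_injective,
    Set.ncard_image_of_injective _ Prod.swap_injective] at h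

theorem ncard_le_mul_add_of_ncard_le_sq {C : Set (ℤ × ℤ)} (hC : C.Finite) {b : ℝ} (hb : 0 ≤ b)
    (hCb : (C.ncard : ℝ) ≤ b ^ 2) :
    (C.ncard : ℝ) ≤ b / 2 * ((topExposed C).ncard + (rightExposed C).ncard) := by
  have := le_mul_add_div_two_of_le_mul_of_le_sq (Nat.cast_nonneg _) (Nat.cast_nonneg _) hb
    (by exact_mod_cast ncard_le_ncard_topExposed_mul_ncard_rightExposed hC) hCb
  linarith

theorem latticeGraph_adj_up (x y : ℤ) : latticeGraph.Adj (x, y) (x, y + 1) := by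
  simp [latticeGraph, latticeAdj]

theorem latticeGraph_adj_right (x y : ℤ) : latticeGraph.Adj (x, y) (x + 1, y) := by
  simp [latticeGraph, latticeAdj]

section inducedComponent

variable {H : Set (ℤ × ℤ)} {p : ℤ × ℤ}

theorem topExposed_inducedComponent :
    topExposed (latticeGraph.inducedComponent H p)
      = topExposed H ∩ latticeGraph.inducedComponent H p := by
  ext q
  exact ⟨fun ⟨hq, hup⟩ => ⟨⟨SimpleGraph.inducedComponent_subset hq, fun h => hup
      (SimpleGraph.mem_inducedComponent_of_adj hq h (latticeGraph_adj_up q.1 q.2))⟩, hq⟩,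
    fun ⟨⟨_, hup⟩, hq⟩ => ⟨hq, fun h => hup (SimpleGraph.inducedComponent_subset h)⟩⟩

theorem rightExposed_inducedComponent :
    rightExposed (latticeGraph.inducedComponent H p)
      = rightExposed H ∩ latticeGraph.inducedComponent H p := by
  ext q
  exact ⟨fun ⟨hq, hup⟩ => ⟨⟨SimpleGraph.inducedComponent_subset hq, fun h => hup
      (SimpleGraph.mem_inducedComponent_of_adj hq h (latticeGraph_adj_right q.1 q.2))⟩, hq⟩,
    fun ⟨⟨_, hup⟩, hq⟩ => ⟨hq, fun h => hup (SimpleGraph.inducedComponent_subset h)⟩⟩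

theorem ncard_setOf_ncard_inducedComponent_le_sq_le (hH : H.Finite) {b : ℝ} (hb : 0 ≤ b) :
    (({p ∈ H | ((latticeGraph.inducedComponent H p).ncard : ℝ) ≤ b ^ 2}).ncard : ℝ)
      ≤ b / 2 * ((topExposed H).ncard + (rightExposed H).ncard) := by
  refine Set.ncard_le_of_ncard_fiber_le (f := latticeGraph.inducedComponent H)
    (hH.subset (Set.sep_subset _ _)) (hH.subset (topExposed_subset H))
    (hH.subset (rightExposed_subset H)) (by positivity) ?_
  rintro p ⟨-, hsmall⟩
  have hsmall_of_mem : latticeGraph.inducedComponent H p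
      ⊆ {p ∈ H | ((latticeGraph.inducedComponent H p).ncard : ℝ) ≤ b ^ 2} := fun q hq =>
    ⟨SimpleGraph.inducedComponent_subset hq,
      (SimpleGraph.inducedComponent_eq_of_mem hq).symm ▸ hsmall⟩
  rw [SimpleGraph.inter_preimage_inducedComponent (Set.sep_subset _ _),
    SimpleGraph.inter_preimage_inducedComponent (topExposed_subset H),
    SimpleGraph.inter_preimage_inducedComponent (rightExposed_subset H),
    Set.inter_eq_right.mpr hsmall_of_mem, ← topExposed_inducedComponent,
    ← rightExposed_inducedComponent]
  exact ncard_le_mul_add_of_ncard_le_sq (hH.subset SimpleGraph.inducedComponent_subset) hb hsmall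

end inducedComponent

theorem small_components_cover_little_general (α β : ℝ) (hβ : 0 < β) (s : ℕ)
    (H : Set (ℤ × ℤ)) (hHsub : H ⊆ gridBox s) (hHcard : (s : ℝ)^2 - α * s ≤ (H.ncard : ℝ)) :
    (({p : ℤ × ℤ | ∃ hp : p ∈ H,
        (Nat.card {q : H // (SimpleGraph.induce H latticeGraph).Reachable ⟨p, hp⟩ q} : ℝ)
          ≤ β * (s : ℝ)^2}).ncard : ℝ)
      ≤ Real.sqrt β * (1 + α) * (s : ℝ)^2 := by
  have hmissing : ((gridBox s \ H).ncard : ℝ) ≤ α * s := by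
    rw [Set.cast_ncard_sdiff hHsub (gridBox_finite s), ncard_gridBox]
    push_cast
    linarith
  have htop : ((topExposed H).ncard : ℝ) ≤ (1 + α) * s := by
    have := ncard_topExposed_le hHsub
    rify at this
    linarith
  have hright : ((rightExposed H).ncard : ℝ) ≤ (1 + α) * s := by
    have := ncard_rightExposed_le hHsub
    rify at this
    linarith
  have hsq : β * (s : ℝ) ^ 2 = (Real.sqrt β * s) ^ 2 := by
    rw [mul_pow, Real.sq_sqrt hβ.le]
  simp only [SimpleGraph.natCard_reachable_eq_ncard_inducedComponent, exists_prop, hsq]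
  calc _ ≤ Real.sqrt β * s / 2 * ((topExposed H).ncard + (rightExposed H).ncard) :=
        ncard_setOf_ncard_inducedComponent_le_sq_le ((gridBox_finite s).subset hHsub)
          (by positivity)
    _ ≤ Real.sqrt β * s / 2 * ((1 + α) * s + (1 + α) * s) := by gcongr
    _ = Real.sqrt β * (1 + α) * (s : ℝ) ^ 2 := by ring

/-- Let `α, β > 0`, `s ∈ ℕ`, and `H ⊆ {1,…,s}²` with `|H| ≥ s² − αs`.
If `H_β` is the union of all connected components of the subgraph of the grid induced by
`H` having at most `β·s²` vertices, then `|H_β| ≤ √β·(1+α)·s²`. -/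
theorem small_components_cover_little (α β : ℝ) (hα : 0 < α) (hβ : 0 < β) (s : ℕ)
    (H : Set (ℤ × ℤ)) (hHsub : H ⊆ gridBox s) (hHcard : (s : ℝ)^2 - α * s ≤ (H.ncard : ℝ)) :
    (({p : ℤ × ℤ | ∃ hp : p ∈ H,
        (Nat.card {q : H // (SimpleGraph.induce H latticeGraph).Reachable ⟨p, hp⟩ q} : ℝ)
          ≤ β * (s : ℝ)^2}).ncard : ℝ)
      ≤ Real.sqrt β * (1 + α) * (s : ℝ)^2 :=
  small_components_cover_little_general α β hβ s H hHsub hHcard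

end
end

section
/- For every ε ∈ (0,1) and every α > 0 there exists k = k(ε,α) ∈ ℕ and s₀ ∈ ℕ such that for all integers s ≥ s₀ the following holds: for every H ⊆ {1,…,s}² with |H| ≥ s² − α·s, the sum of the sizes of the k largest connected components of the subgraph of the grid graph induced by H (the sum of all component sizes if there are fewer than k components) is at least (1−ε)·s². Moreover, if α ≤ ε/2 then one may take k = 1. -/
/-!
Let `n = ⌊s / t⌋` and cut `(0, tn]²` into `t²` squares of side `n`. If a square misses
`m' < n` points of `H`, some column of it lies in `H`, and so does every row that avoids the
missing points; all these rows meet that column, so one component of `H` contains all but at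
most `n m'` points of the square. Summing over the squares, the chosen `≤ t²` components miss at
most `n |gridBox s \ H| ≤ α s² / t` points of `(0, tn]²`, which in turn misses at most `2ts`
points of the grid. With `t = ⌈2α / ε⌉` both losses are at most `ε s² / 2`, and `t = 1` as soon
as `α ≤ ε / 2`.
-/

open Filter Topology

noncomputable section

namespace SimpleGraph

variable {V : Type*} {G : SimpleGraph V} {s : Set V}

theorem induce_reachable_of_chain (γ : ℤ → V) (hγ : ∀ k, G.Adj (γ k) (γ (k + 1))) {i j : ℤ}
    (hs : ∀ k ∈ Set.uIcc i j, γ k ∈ s) :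
    (G.induce s).Reachable ⟨γ i, hs i Set.left_mem_uIcc⟩ ⟨γ j, hs j Set.right_mem_uIcc⟩ := by
  wlog hij : i ≤ j generalizing i j
  · exact (this (fun k hk => hs k (Set.uIcc_comm i j ▸ hk)) (le_of_not_ge hij)).symm
  induction j, hij using Int.leInduction with
  | base => rfl
  | succ j hij ih =>
    have hsj : ∀ k ∈ Set.uIcc i j, γ k ∈ s := fun k hk =>
      hs k (Set.uIcc_subset_uIcc_left (Set.mem_uIcc.2 (.inl ⟨hij, by omega⟩)) hk)
    exact (ih hsj).trans (Adj.reachable (hγ j))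

end SimpleGraph

open SimpleGraph

theorem Set.sum_ncard_inter_le {ι α : Type*} {A : Set α} (hA : A.Finite) (Q : Finset ι)
    {B : ι → Set α} (hB : (Q : Set ι).PairwiseDisjoint B) :
    ∑ q ∈ Q, (A ∩ B q).ncard ≤ A.ncard := by
  rw [← finsum_mem_coe_finset, ← Q.finite_toSet.ncard_biUnion (fun _ _ => hA.inter_of_left _)
    (hB.mono fun _ => Set.inter_subset_right)]
  exact Set.ncard_le_ncard (Set.iUnion₂_subset fun _ _ => Set.inter_subset_left) hA

lemma latticeAdj_add_fst (x y : ℤ) : latticeAdj (x, y) (x + 1, y) := by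
  simp [latticeAdj]

lemma latticeAdj_add_snd (x y : ℤ) : latticeAdj (x, y) (x, y + 1) := by
  simp [latticeAdj]

def square (a b : ℤ) (n : ℕ) : Set (ℤ × ℤ) := Set.Ioc a (a + n) ×ˢ Set.Ioc b (b + n)

lemma ncard_Ioc_add (a : ℤ) (n : ℕ) : (Set.Ioc a (a + n)).ncard = n := by
  rw [← Finset.coe_Ioc, Set.ncard_coe_finset, Int.card_Ioc]
  omega

lemma square_finite (a b : ℤ) (n : ℕ) : (square a b n).Finite :=
  (Set.finite_Ioc _ _).prod (Set.finite_Ioc _ _)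

lemma ncard_square (a b : ℤ) (n : ℕ) : (square a b n).ncard = n * n := by
  rw [square, Set.ncard_prod, ncard_Ioc_add, ncard_Ioc_add]

lemma gridBox_eq_square (s : ℕ) : gridBox s = square 0 0 s := by
  ext ⟨x, y⟩
  simp only [gridBox, square, Set.mem_prod, Set.mem_Icc, Set.mem_Ioc]
  omega

theorem exists_component_large_in_square {H : Set (ℤ × ℤ)} {a b : ℤ} {n : ℕ}
    (hm : (square a b n \ H).ncard < n) :
    ∃ C : (latticeGraph.induce H).ConnectedComponent,
      n * n ≤ (Subtype.val '' C.supp ∩ square a b n).ncard + n * (square a b n \ H).ncard := by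
  set D := square a b n \ H
  have hD : D.Finite := (square_finite a b n).subset Set.sdiff_subset
  have hmem : ∀ p ∈ square a b n, p ∉ D → p ∈ H := fun p hp hpD =>
    by_contra fun h => hpD ⟨hp, h⟩
  obtain ⟨x₀, hx₀, hx₀D⟩ : ∃ x₀ ∈ Set.Ioc a (a + n), x₀ ∉ Prod.fst '' D :=
    Set.exists_mem_notMem_of_ncard_lt_ncard
      (by rw [ncard_Ioc_add]; exact (Set.ncard_image_le hD).trans_lt hm) (hD.image _)
  have hcol : ∀ y ∈ Set.Ioc b (b + n), (x₀, y) ∈ H := fun y hy =>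
    hmem _ ⟨hx₀, hy⟩ fun h => hx₀D ⟨_, h, rfl⟩
  have hb : b + 1 ∈ Set.Ioc b (b + n) := by simp only [Set.mem_Ioc]; omega
  set C := (latticeGraph.induce H).connectedComponentMk ⟨(x₀, b + 1), hcol _ hb⟩
  refine ⟨C, ?_⟩
  have hcover : square a b n ⊆
      (Subtype.val '' C.supp ∩ square a b n) ∪ Set.Ioc a (a + n) ×ˢ (Prod.snd '' D) := by
    rintro ⟨x, y⟩ hp
    by_cases hy : y ∈ Prod.snd '' D
    · exact .inr ⟨hp.1, hy⟩
    have hrow : ∀ x' ∈ Set.Ioc a (a + n), (x', y) ∈ H := fun x' hx' =>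
      hmem _ ⟨hx', hp.2⟩ fun h => hy ⟨_, h, rfl⟩
    have along_row := induce_reachable_of_chain (G := latticeGraph) (fun k => (k, y))
      (fun k => latticeAdj_add_fst k y) (i := x) (j := x₀)
      fun k hk => hrow k (Set.ordConnected_Ioc.uIcc_subset hp.1 hx₀ hk)
    have along_col := induce_reachable_of_chain (G := latticeGraph) (fun k => (x₀, k))
      (fun k => latticeAdj_add_snd x₀ k) (i := y) (j := b + 1)
      fun k hk => hcol k (Set.ordConnected_Ioc.uIcc_subset hp.2 hb hk)
    exact .inl ⟨⟨_, ConnectedComponent.sound (along_row.trans along_col), rfl⟩, hp⟩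
  calc n * n = (square a b n).ncard := (ncard_square a b n).symm
    _ ≤ _ := Set.ncard_le_ncard hcover (((square_finite a b n).inter_of_right _).union
          ((Set.finite_Ioc _ _).prod (hD.image _)))
    _ ≤ _ := Set.ncard_union_le _ _
    _ ≤ _ := by
      rw [Set.ncard_prod, ncard_Ioc_add]
      gcongr
      exact Set.ncard_image_le hD

theorem exists_finset_component_large_in_square (H : Set (ℤ × ℤ)) (a b : ℤ) (n : ℕ) :
    ∃ S : Finset (latticeGraph.induce H).ConnectedComponent, S.card ≤ 1 ∧
      n * n ≤ ∑ C ∈ S, (Subtype.val '' C.supp ∩ square a b n).ncard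
        + n * (square a b n \ H).ncard := by
  by_cases hm : (square a b n \ H).ncard < n
  · obtain ⟨C, hC⟩ := exists_component_large_in_square hm
    exact ⟨{C}, by simp, by simpa using hC⟩
  · exact ⟨∅, by simp, by simpa using Nat.mul_le_mul_left n (not_lt.1 hm)⟩

def tile (n : ℕ) (q : ℕ × ℕ) : Set (ℤ × ℤ) := square (q.1 * n : ℕ) (q.2 * n : ℕ) n

lemma disjoint_Ioc_mul_of_ne {n i j : ℕ} (hij : i ≠ j) :
    Disjoint (Set.Ioc ((i * n : ℕ) : ℤ) ((i * n : ℕ) + n))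
      (Set.Ioc ((j * n : ℕ) : ℤ) ((j * n : ℕ) + n)) := by
  wlog h : i < j generalizing i j
  · exact (this hij.symm (lt_of_le_of_ne (not_lt.1 h) hij.symm)).symm
  have : i * n + n ≤ j * n := by nlinarith
  rw [Set.Ioc_disjoint_Ioc]
  omega

open scoped Function in
lemma pairwise_disjoint_tile (n : ℕ) : Pairwise (Disjoint on (tile n)) := by
  rintro ⟨i, j⟩ ⟨i', j'⟩ hne
  simp only [Function.onFun, tile, square, Set.disjoint_prod]
  by_cases hi : i = i'
  · exact .inr (disjoint_Ioc_mul_of_ne fun hj => hne (by rw [hi, hj]))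
  · exact .inl (disjoint_Ioc_mul_of_ne hi)

lemma tile_subset_square {t n : ℕ} {q : ℕ × ℕ} (hq : q ∈ Finset.range t ×ˢ Finset.range t) :
    tile n q ⊆ square 0 0 (t * n) := by
  simp only [Finset.mem_product, Finset.mem_range] at hq
  have h1 : q.1 * n + n ≤ t * n := by nlinarith
  have h2 : q.2 * n + n ≤ t * n := by nlinarith
  rintro ⟨x, y⟩ ⟨⟨hx, hx'⟩, ⟨hy, hy'⟩⟩
  simp only [square, Set.mem_prod, Set.mem_Ioc]
  omega

theorem exists_components_cover_tiled_square {H : Set (ℤ × ℤ)} (hH : H.Finite) (t n : ℕ) :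
    ∃ S : Finset (latticeGraph.induce H).ConnectedComponent, S.card ≤ t ^ 2 ∧
      (t * n) ^ 2 ≤ ∑ C ∈ S, C.supp.ncard + n * (square 0 0 (t * n) \ H).ncard := by
  classical
  set Q := Finset.range t ×ˢ Finset.range t
  choose S hS1 hS using fun q : ℕ × ℕ =>
    exists_finset_component_large_in_square H (q.1 * n : ℕ) (q.2 * n : ℕ) n
  have hdisj : (Q : Set (ℕ × ℕ)).PairwiseDisjoint (tile n) :=
    (pairwise_disjoint_tile n).set_pairwise _
  have hcomp : ∀ C : (latticeGraph.induce H).ConnectedComponent,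
      ∑ q ∈ Q, (Subtype.val '' C.supp ∩ tile n q).ncard ≤ C.supp.ncard := fun C => by
    rw [← Set.ncard_image_of_injective _ Subtype.val_injective]
    exact Set.sum_ncard_inter_le (hH.subset (by simp)) Q hdisj
  have hmiss : ∑ q ∈ Q, (tile n q \ H).ncard ≤ (square 0 0 (t * n) \ H).ncard := by
    refine le_of_eq_of_le (Finset.sum_congr rfl fun q hq => ?_)
      (Set.sum_ncard_inter_le ((square_finite 0 0 _).subset Set.sdiff_subset) Q hdisj)
    rw [Set.inter_comm, ← Set.inter_sdiff_assoc, Set.inter_eq_left.2 (tile_subset_square hq)]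
  refine ⟨Q.biUnion S, ?_, ?_⟩
  · calc (Q.biUnion S).card ≤ Q.card * 1 :=
          Finset.card_biUnion_le_card_mul _ _ _ fun q _ => hS1 q
      _ = t ^ 2 := by simp [Q, sq]
  calc (t * n) ^ 2 = ∑ q ∈ Q, n * n := by simp [Q]; ring
    _ ≤ ∑ q ∈ Q, (∑ C ∈ S q, (Subtype.val '' C.supp ∩ tile n q).ncard
          + n * (tile n q \ H).ncard) := Finset.sum_le_sum fun q _ => hS q
    _ ≤ ∑ q ∈ Q, ∑ C ∈ Q.biUnion S, (Subtype.val '' C.supp ∩ tile n q).ncard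
          + n * ∑ q ∈ Q, (tile n q \ H).ncard := by
      rw [Finset.mul_sum, ← Finset.sum_add_distrib]
      gcongr with q hq
      exact Finset.subset_biUnion_of_mem S hq
    _ ≤ ∑ C ∈ Q.biUnion S, C.supp.ncard + n * (square 0 0 (t * n) \ H).ncard := by
      rw [Finset.sum_comm]
      gcongr with C
      exact hcomp C

lemma one_sub_mul_sq_le_of_tiling {ε α s T N m X : ℝ} (hε : ε ∈ Set.Ioo (0 : ℝ) 1)
    (hs : 0 ≤ s) (hN : 0 ≤ N) (hTN : T * N ≤ s) (hsTN : s ≤ T * N + T) (hαT : 2 * α ≤ ε * T)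
    (hTs : 4 * T ≤ ε * s) (hm : m ≤ α * s) (hX : (T * N) ^ 2 ≤ X + N * m) :
    (1 - ε) * s ^ 2 ≤ X := by
  obtain ⟨hε0, hε1⟩ := hε
  have hrounding : s ^ 2 - ε / 2 * s ^ 2 ≤ (T * N) ^ 2 := by
    have : 0 ≤ s - T := by nlinarith
    nlinarith [mul_le_mul this (show s - T ≤ T * N by linarith) this (by linarith)]
  have hmissing : N * m ≤ ε / 2 * s ^ 2 := by
    calc N * m ≤ N * (α * s) := mul_le_mul_of_nonneg_left hm hN
      _ ≤ N * (ε * T / 2 * s) := by gcongr; linarith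
      _ = ε / 2 * (T * N) * s := by ring
      _ ≤ ε / 2 * s * s := by gcongr
      _ = ε / 2 * s ^ 2 := by ring
  nlinarith

lemma ncard_square_sdiff_add_ncard_le {H : Set (ℤ × ℤ)} {k s : ℕ} (hk : k ≤ s)
    (hH : H ⊆ gridBox s) : (square 0 0 k \ H).ncard + H.ncard ≤ s ^ 2 := by
  rw [gridBox_eq_square] at hH
  have hsub : square 0 0 k ⊆ square 0 0 s :=
    Set.prod_mono (Set.Ioc_subset_Ioc_right (by simpa using hk))
      (Set.Ioc_subset_Ioc_right (by simpa using hk))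
  calc (square 0 0 k \ H).ncard + H.ncard ≤ (square 0 0 s \ H).ncard + H.ncard := by
        gcongr
        exact (square_finite 0 0 s).subset Set.sdiff_subset
    _ = s ^ 2 := by
        rw [Set.ncard_sdiff_add_ncard_of_subset hH (square_finite 0 0 s), ncard_square, sq]

/-- For every `ε ∈ (0,1)` and `α > 0` there are `k = k(ε,α)` and `s₀`
such that for all `s ≥ s₀` and every `H ⊆ {1,…,s}²` with `|H| ≥ s² − αs`, the `k` largest
connected components of the subgraph of the grid induced by `H` together have at least
`(1−ε)·s²` vertices (equivalently, some at most `k` distinct components have total size at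
least `(1−ε)·s²`). Moreover, if `α ≤ ε/2` one may take `k = 1`. -/
theorem boundedly_many_components_cover (ε : ℝ) (hε : ε ∈ Set.Ioo (0 : ℝ) 1)
    (α : ℝ) (hα : 0 < α) :
    ∃ k : ℕ, (α ≤ ε / 2 → k = 1) ∧
      ∃ s₀ : ℕ, ∀ s : ℕ, s₀ ≤ s →
        ∀ H : Set (ℤ × ℤ), H ⊆ gridBox s → (s : ℝ)^2 - α * s ≤ (H.ncard : ℝ) →
          ∃ S : Finset (SimpleGraph.induce H latticeGraph).ConnectedComponent,
            S.card ≤ k ∧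
            (1 - ε) * (s : ℝ)^2 ≤ ∑ C ∈ S, (C.supp.ncard : ℝ) := by
  have hε0 := hε.1
  set t := ⌈2 * α / ε⌉₊
  have ht : 0 < t := Nat.ceil_pos.2 (by positivity)
  have hαt : 2 * α ≤ ε * t := by
    rw [mul_comm ε, ← div_le_iff₀ hε0]
    exact Nat.le_ceil _
  refine ⟨t ^ 2, fun hαε => ?_, ⌈4 * t / ε⌉₊, fun s hs H hHs hH => ?_⟩
  · have : t ≤ 1 := Nat.ceil_le.2 (by rw [Nat.cast_one, div_le_iff₀ hε0]; linarith)
    rw [show t = 1 by omega, one_pow]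
  set n := s / t
  have hHfin : H.Finite := (square_finite 0 0 s).subset (gridBox_eq_square s ▸ hHs)
  have htn : t * n ≤ s := Nat.mul_div_le s t
  obtain ⟨S, hSk, hS⟩ := exists_components_cover_tiled_square hHfin t n
  have hmiss := ncard_square_sdiff_add_ncard_le htn hHs
  refine ⟨S, hSk, one_sub_mul_sq_le_of_tiling (T := t) (m := (square 0 0 (t * n) \ H).ncard)
    hε s.cast_nonneg n.cast_nonneg (by exact_mod_cast htn) ?_ hαt ?_ ?_ (by exact_mod_cast hS)⟩
  · have := (Nat.lt_mul_div_succ s ht).le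
    rw [mul_add_one] at this
    exact_mod_cast this
  · rw [mul_comm ε, ← div_le_iff₀ hε0]
    exact Nat.ceil_le.1 hs
  · have : ((square 0 0 (t * n) \ H).ncard : ℝ) + H.ncard ≤ s ^ 2 := by exact_mod_cast hmiss
    linarith

end
end
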